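/- arXiv:1503.02411 — 5 statements merged into one kernel-verified Lean document; each statement's English description precedes it below -/
import Mathlib

section
/- Let s_c ∈ ℝ and let K : ℝ → ℝ be continuously differentiable with K(s) ≥ 0 and K'(s) ≥ 0 for all s, such that s ↦ √(K(s)) is integrable on (−∞, s_c] and s ↦ ∫_{−∞}^{s} √(K(u)) du is integrable on (−∞, s_c]. Let β : ℝ → ℝ be twice differentiable with β''(s) + K(s) β(s) = 0 for all s ∈ ℝ. Then there exist constants c₁, c₂ ∈ ℝ such that β'(s) → c₁ and β(s) − c₁ s → c₂ as s → −∞. -/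
/-!
The energy `E = β'² + K β²` of a solution of `β'' + K β = 0` satisfies `E' = K' β² ≥ 0`, so it is
bounded on `(-∞, s_c]` by `B = E(s_c)`. Hence `|β''| = |K β| ≤ √B √K` is integrable there and `β'`
has a limit `c₁` at `-∞`, with `|β'(s) - c₁| ≤ √B ∫_{-∞}^s √K`. The right-hand side is integrable
on `(-∞, s_c]` as well, so `β(s) - c₁ s`, whose derivative is `β' - c₁`, also has a limit.
-/

open MeasureTheory Filter Set Topology

section TailEstimate

variable {E : Type*} [NormedAddCommGroup E] [NormedSpace ℝ E] [CompleteSpace E]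

theorem norm_sub_le_integral_Iic_of_hasDerivAt {f f' : ℝ → E} {g : ℝ → ℝ} {a x : ℝ} {m : E}
    (hderiv : ∀ y ∈ Iic a, HasDerivAt f (f' y) y) (hf' : IntegrableOn f' (Iic a))
    (hg : IntegrableOn g (Iic a)) (hbound : ∀ y ∈ Iic a, ‖f' y‖ ≤ g y)
    (hf : Tendsto f atBot (𝓝 m)) (hx : x ≤ a) :
    ‖f x - m‖ ≤ ∫ y in Iic x, g y := by
  have hsub : Iic x ⊆ Iic a := Iic_subset_Iic.2 hx
  rw [← integral_Iic_of_hasDerivAt_of_tendsto' (fun y hy => hderiv y (hsub hy))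
    (hf'.mono_set hsub) hf]
  exact norm_integral_le_of_norm_le (hg.mono_set hsub)
    (ae_restrict_of_forall_mem measurableSet_Iic fun y hy => hbound y (hsub hy))

end TailEstimate

theorem abs_mul_le_sqrt_mul_sqrt_of_mul_sq_le {k b B : ℝ} (hk : 0 ≤ k) (h : k * b ^ 2 ≤ B) :
    |k * b| ≤ √B * √k := by
  calc |k * b| = √(k * b ^ 2 * k) := by rw [← Real.sqrt_sq_eq_abs]; ring_nf
    _ = √(k * b ^ 2) * √k := Real.sqrt_mul' _ hk
    _ ≤ √B * √k := by gcongr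

noncomputable def oscillatorEnergy (K β : ℝ → ℝ) (s : ℝ) : ℝ :=
  deriv β s ^ 2 + K s * β s ^ 2

section OscillatorEnergy

variable {K β : ℝ → ℝ}

theorem hasDerivAt_oscillatorEnergy {s : ℝ} (hK : DifferentiableAt ℝ K s)
    (hβ : DifferentiableAt ℝ β s) (hβ' : DifferentiableAt ℝ (deriv β) s)
    (hode : deriv (deriv β) s + K s * β s = 0) :
    HasDerivAt (oscillatorEnergy K β) (deriv K s * β s ^ 2) s := by
  have h := (hβ'.hasDerivAt.fun_pow 2).add (hK.hasDerivAt.mul (hβ.hasDerivAt.fun_pow 2))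
  refine h.congr_deriv ?_
  linear_combination 2 * deriv β s * hode

theorem monotone_oscillatorEnergy (hK : Differentiable ℝ K) (hK' : ∀ s, 0 ≤ deriv K s)
    (hβ : Differentiable ℝ β) (hβ' : Differentiable ℝ (deriv β))
    (hode : ∀ s, deriv (deriv β) s + K s * β s = 0) :
    Monotone (oscillatorEnergy K β) := by
  have hE s := hasDerivAt_oscillatorEnergy (hK s) (hβ s) (hβ' s) (hode s)
  refine monotone_of_deriv_nonneg (fun s => (hE s).differentiableAt) fun s => ?_
  rw [(hE s).deriv]
  exact mul_nonneg (hK' s) (sq_nonneg _)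

theorem mul_sq_le_oscillatorEnergy (s : ℝ) : K s * β s ^ 2 ≤ oscillatorEnergy K β s :=
  le_add_of_nonneg_left (sq_nonneg _)

end OscillatorEnergy

theorem small_time_asymptotics_lemma (s_c : ℝ) (K : ℝ → ℝ)
    (hK : ContDiff ℝ 1 K)
    (hKpos : ∀ s : ℝ, 0 ≤ K s)
    (hK' : ∀ s : ℝ, 0 ≤ deriv K s)
    (hint₁ : IntegrableOn (fun s : ℝ => Real.sqrt (K s)) (Set.Iic s_c))
    (hint₂ : IntegrableOn (fun s : ℝ => ∫ u in Set.Iic s, Real.sqrt (K u)) (Set.Iic s_c))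
    (β : ℝ → ℝ)
    (hβ : Differentiable ℝ β) (hβ' : Differentiable ℝ (deriv β))
    (hode : ∀ s : ℝ, deriv (deriv β) s + K s * β s = 0) :
    ∃ c₁ c₂ : ℝ,
      Tendsto (deriv β) atBot (nhds c₁) ∧
      Tendsto (fun s : ℝ => β s - c₁ * s) atBot (nhds c₂) := by
  set B := oscillatorEnergy K β s_c
  have hβ'' s : HasDerivAt (deriv β) (-(K s * β s)) s := by
    simpa [eq_neg_of_add_eq_zero_left (hode s)] using (hβ' s).hasDerivAt
  have hβ''_le : ∀ s ∈ Iic s_c, ‖-(K s * β s)‖ ≤ √B * √(K s) := fun s hs => by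
    rw [norm_neg, Real.norm_eq_abs]
    exact abs_mul_le_sqrt_mul_sqrt_of_mul_sq_le (hKpos s) ((mul_sq_le_oscillatorEnergy s).trans
      (monotone_oscillatorEnergy (hK.differentiable one_ne_zero) hK' hβ hβ' hode hs))
  have hβ''_int : IntegrableOn (fun s => -(K s * β s)) (Iic s_c) :=
    (hint₁.const_mul √B).mono' (hK.continuous.mul hβ.continuous).neg.aestronglyMeasurable.restrict
      (ae_restrict_of_forall_mem measurableSet_Iic hβ''_le)
  have hc₁ := tendsto_limUnder_of_hasDerivAt_of_integrableOn_Iic (fun s _ => hβ'' s) hβ''_int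
  set c₁ := limUnder atBot (deriv β)
  have hdev_le : ∀ s ∈ Iic s_c, ‖deriv β s - c₁‖ ≤ √B * ∫ u in Iic s, √(K u) := fun s hs => by
    rw [← integral_const_mul]
    exact norm_sub_le_integral_Iic_of_hasDerivAt (fun s _ => hβ'' s) hβ''_int
      (hint₁.const_mul √B) hβ''_le hc₁ hs
  have hdev_int : IntegrableOn (fun s => deriv β s - c₁) (Iic s_c) :=
    (hint₂.const_mul √B).mono' (hβ'.continuous.sub continuous_const).aestronglyMeasurable.restrict
      (ae_restrict_of_forall_mem measurableSet_Iic hdev_le)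
  refine ⟨c₁, _, hc₁, tendsto_limUnder_of_hasDerivAt_of_integrableOn_Iic
    (fun s _ => (hβ s).hasDerivAt.sub (hasDerivAt_const_mul c₁)) hdev_int⟩
end

section
/- Let p = (p₁, p₂, p₃) ∈ ℝ³ satisfy p₁ + p₂ + p₃ = 1 and p₁² + p₂² + p₃² = 1, and let ω = (ω₁, ω₂, ω₃) ∈ ℝ³ be such that for every index j with p_j = 1 one has ω_j = 0. Let α : (0,∞) → ℂ be twice differentiable and satisfy the mode ODE α''(t) + α'(t)/t + 4π² (Σ_{j=1}^{3} ω_j² t^{-2p_j}) α(t) = 0 for all t > 0. Then there exist constants c₁, c₂ ∈ ℂ such that α(t) − (c₁ ln t + c₂) → 0 as t → 0⁺. -/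
/-!
Put `β = t α'`. The mode equation becomes the first-order system `α' = β / t`, `β' = -g α` with
`g t = t · 4π² ∑ ω_j² t^(-2 p_j) ≥ 0`. Since `p_j ≤ 1` (from `∑ p_j² = 1`) and `p_j = 1` forces
`ω_j = 0`, every surviving exponent has `1 - 2 p_j > -1`, so `g t ≤ C t^(l-1)` on `(0, 1]` for
some `l > 0`. For `ε > 0` the energy `E = ε² |α|² + |β|²` satisfies `E' ≥ -(ε / t + g / ε) E`
(expand `‖ε α ± β‖² ≥ 0`), so `E t^ε` stays bounded as `t → 0`; hence `|α| = O(t^(-l/2))`. Then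
`|β'| = g |α| = O(t^(l/2 - 1))` is integrable at `0`, so `β → c₁` with error `O(t^(l/2))`, and
`(α - c₁ log t)' = (β - c₁) / t = O(t^(l/2 - 1))` is integrable as well.
-/

open Real Filter Finset

open scoped RealInnerProductSpace Topology

open MeasureTheory

lemma le_one_of_sum_sq_eq_one {ι : Type*} [Fintype ι] {p : ι → ℝ} (hsq : ∑ j, p j ^ 2 = 1)
    (j : ι) : p j ≤ 1 := by
  have : p j ^ 2 ≤ 1 := hsq ▸ single_le_sum (fun i _ ↦ sq_nonneg (p i)) (mem_univ j)
  nlinarith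

lemma exists_pos_forall_le_of_forall_pos {ι : Type*} [Finite ι] {e : ι → ℝ}
    (he : ∀ j, 0 < e j) : ∃ l > 0, ∀ j, l ≤ e j := by
  cases isEmpty_or_nonempty ι
  · exact ⟨1, one_pos, isEmptyElim⟩
  · obtain ⟨j₀, hj₀⟩ := Finite.exists_min e
    exact ⟨e j₀, he j₀, hj₀⟩

lemma sum_mul_rpow_le_sum_mul_rpow {ι : Type*} (s : Finset ι) {a r : ι → ℝ} {σ t : ℝ}
    (ht₀ : 0 < t) (ht₁ : t ≤ 1) (ha : ∀ j, 0 ≤ a j) (hr : ∀ j, a j ≠ 0 → σ ≤ r j) :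
    ∑ j ∈ s, a j * t ^ r j ≤ (∑ j ∈ s, a j) * t ^ σ := by
  rw [sum_mul]
  refine sum_le_sum fun j _ ↦ ?_
  rcases eq_or_ne (a j) 0 with h | h
  · simp [h]
  · exact mul_le_mul_of_nonneg_left (rpow_le_rpow_of_exponent_ge ht₀ ht₁ (hr j h)) (ha j)

section KasnerPotential

variable {ι : Type*} [Fintype ι]

noncomputable def kasnerPotential (p ω : ι → ℝ) (t : ℝ) : ℝ :=
  4 * π ^ 2 * ∑ j, ω j ^ 2 * t ^ (-(2 * p j))

lemma kasnerPotential_nonneg (p ω : ι → ℝ) {t : ℝ} (ht : 0 ≤ t) : 0 ≤ kasnerPotential p ω t := by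
  unfold kasnerPotential
  have := fun j ↦ rpow_nonneg ht (-(2 * p j))
  positivity

lemma continuousOn_kasnerPotential (p ω : ι → ℝ) :
    ContinuousOn (kasnerPotential p ω) (Set.Ioi 0) := by
  refine continuousOn_const.mul (continuousOn_finsetSum _ fun j _ ↦ continuousOn_const.mul ?_)
  exact continuousOn_id.rpow_const fun t ht ↦ .inl (ne_of_gt ht)

lemma exists_mul_kasnerPotential_le {p ω : ι → ℝ} (hsq : ∑ j, p j ^ 2 = 1)
    (hω : ∀ j, p j = 1 → ω j = 0) :
    ∃ l : ℝ, 0 < l ∧ ∀ t ∈ Set.Ioc (0 : ℝ) 1,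
      t * kasnerPotential p ω t ≤ (4 * π ^ 2 * ∑ j, ω j ^ 2) * t ^ (l - 1) := by
  have hp : ∀ j, ω j ≠ 0 → 0 < 2 - 2 * p j := fun j hj ↦ by
    have := (le_one_of_sum_sq_eq_one hsq j).lt_of_ne (mt (hω j) hj)
    linarith
  obtain ⟨l, hl, hle⟩ := exists_pos_forall_le_of_forall_pos
    (e := fun j ↦ if ω j = 0 then 1 else 2 - 2 * p j) fun j ↦ by
      split_ifs with h
      exacts [one_pos, hp j h]
  refine ⟨l, hl, fun t ⟨ht₀, ht₁⟩ ↦ ?_⟩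
  have key : ∑ j, ω j ^ 2 * t ^ (1 + -(2 * p j)) ≤ (∑ j, ω j ^ 2) * t ^ (l - 1) :=
    sum_mul_rpow_le_sum_mul_rpow _ ht₀ ht₁ (fun j ↦ sq_nonneg _) fun j hj ↦ by
      have := hle j
      rw [if_neg (pow_ne_zero_iff two_ne_zero |>.mp hj)] at this
      linarith
  simp only [rpow_add ht₀, rpow_one] at key
  calc t * kasnerPotential p ω t
      = 4 * π ^ 2 * ∑ j, ω j ^ 2 * (t * t ^ (-(2 * p j))) := by
        simp only [kasnerPotential, mul_sum]
        exact sum_congr rfl fun j _ ↦ by ring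
    _ ≤ 4 * π ^ 2 * ((∑ j, ω j ^ 2) * t ^ (l - 1)) :=
        mul_le_mul_of_nonneg_left key (by positivity)
    _ = _ := (mul_assoc ..).symm

end KasnerPotential

lemma hasDerivAt_ofReal_mul_deriv_of_mode {α : ℝ → ℂ} {t q : ℝ} (ht : t ≠ 0)
    (hα' : DifferentiableAt ℝ (deriv α) t)
    (hode : deriv (deriv α) t + deriv α t / t + q * α t = 0) :
    HasDerivAt (fun s : ℝ ↦ (s : ℂ) * deriv α s) (-(t * q) • α t) t := by
  refine ((hasDerivAt_id t).ofReal_comp.mul hα'.hasDerivAt).congr_deriv ?_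
  have ht' : (t : ℂ) ≠ 0 := Complex.ofReal_ne_zero.2 ht
  field_simp at hode
  simp only [Complex.real_smul, Complex.ofReal_neg, Complex.ofReal_mul, id, Complex.ofReal_one]
  linear_combination hode

lemma exists_norm_sub_le_rpow_of_hasDerivAt {E : Type*} [NormedAddCommGroup E]
    [NormedSpace ℝ E] [CompleteSpace E] {f f' : ℝ → E} {k c : ℝ} (hc : 0 < c)
    (hf : ∀ t ∈ Set.Ioc (0 : ℝ) 1, HasDerivAt f (f' t) t) (hf' : ContinuousOn f' (Set.Ioc 0 1))
    (hbound : ∀ t ∈ Set.Ioc (0 : ℝ) 1, ‖f' t‖ ≤ k * t ^ (c - 1)) :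
    ∃ L, ∀ t ∈ Set.Ioc (0 : ℝ) 1, ‖f t - L‖ ≤ k / c * t ^ c := by
  have hc' : -1 < c - 1 := by linarith
  have hk : ∀ t, IntervalIntegrable (fun s ↦ k * s ^ (c - 1)) volume 0 t :=
    fun t ↦ (intervalIntegral.intervalIntegrable_rpow' hc').const_mul k
  have hint : ∀ t ∈ Set.Icc (0 : ℝ) 1, IntervalIntegrable f' volume 0 t := by
    intro t ht
    have hkt := hk t
    rw [intervalIntegrable_iff_integrableOn_Ioc_of_le ht.1] at hkt ⊢
    refine hkt.mono'
      ((hf'.mono (Set.Ioc_subset_Ioc_right ht.2)).aestronglyMeasurable measurableSet_Ioc) ?_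
    exact (ae_restrict_iff' measurableSet_Ioc).2
      (.of_forall fun s hs ↦ hbound s ⟨hs.1, hs.2.trans ht.2⟩)
  refine ⟨f 1 - ∫ s in (0 : ℝ)..1, f' s, fun t ht ↦ ?_⟩
  have hsub : Set.uIcc t 1 ⊆ Set.Ioc 0 1 := by
    rw [Set.uIcc_of_le ht.2]
    exact Set.Icc_subset_Ioc ht.1 le_rfl
  have hftc : ∫ s in t..1, f' s = f 1 - f t :=
    intervalIntegral.integral_eq_sub_of_hasDerivAt (fun s hs ↦ hf s (hsub hs))
      (hf'.mono hsub).intervalIntegrable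
  have hsplit : f t - (f 1 - ∫ s in (0 : ℝ)..1, f' s) = ∫ s in (0 : ℝ)..t, f' s := by
    have h := intervalIntegral.integral_interval_sub_left (hint 1 ⟨zero_le_one, le_rfl⟩)
      (hint t ⟨ht.1.le, ht.2⟩)
    rw [hftc, sub_eq_iff_eq_add] at h
    rw [h]
    abel
  rw [hsplit]
  calc ‖∫ s in (0 : ℝ)..t, f' s‖ ≤ ∫ s in (0 : ℝ)..t, k * s ^ (c - 1) :=
        intervalIntegral.norm_integral_le_of_norm_le ht.1.le
          (.of_forall fun s hs ↦ hbound s ⟨hs.1, hs.2.trans ht.2⟩) (hk t)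
    _ = k / c * t ^ c := by
        rw [intervalIntegral.integral_const_mul, integral_rpow (.inl hc'), sub_add_cancel,
          zero_rpow hc.ne']
        ring

lemma monotoneOn_mul_exp_of_hasDerivAt {D : Set ℝ} (hD : Convex ℝ D) {u v u' v' : ℝ → ℝ}
    (hu : ∀ t ∈ D, HasDerivAt u (u' t) t) (hv : ∀ t ∈ D, HasDerivAt v (v' t) t)
    (h : ∀ t ∈ interior D, -(v' t * u t) ≤ u' t) :
    MonotoneOn (fun t ↦ u t * exp (v t)) D := by
  have hd : ∀ t ∈ D,
      HasDerivAt (fun t ↦ u t * exp (v t)) ((u' t + v' t * u t) * exp (v t)) t :=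
    fun t ht ↦ ((hu t ht).mul (hv t ht).exp).congr_deriv (by ring)
  refine monotoneOn_of_hasDerivWithinAt_nonneg hD
    (fun t ht ↦ (hd t ht).continuousAt.continuousWithinAt)
    (fun t ht ↦ (hd t (interior_subset ht)).hasDerivWithinAt) fun t ht ↦ ?_
  have := h t ht
  exact mul_nonneg (by linarith) (exp_pos _).le

section ModeSystem

variable {E : Type*} [NormedAddCommGroup E] [InnerProductSpace ℝ E]

lemma neg_rate_mul_energy_le_energy_deriv (x y : E) {ε s g : ℝ} (hε : 0 < ε) (hs : 0 ≤ s) (hg : 0 ≤ g) :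
    -((ε * s + g / ε) * (ε ^ 2 * ‖x‖ ^ 2 + ‖y‖ ^ 2)) ≤
      ε ^ 2 * (2 * ⟪x, s • y⟫) + 2 * ⟪y, -g • x⟫ := by
  have hadd := norm_add_sq_real (ε • x) y
  have hsub := norm_sub_sq_real (ε • x) y
  simp only [norm_smul, real_inner_smul_left, real_inner_smul_right, Real.norm_eq_abs,
    abs_of_pos hε] at hadd hsub ⊢
  rw [real_inner_comm x y]
  have h : 0 ≤ ε * s * ‖ε • x + y‖ ^ 2 + g / ε * ‖ε • x - y‖ ^ 2 := by positivity
  rw [hadd, hsub] at h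
  field_simp at h ⊢
  linarith

variable {a b : ℝ → E} {g : ℝ → ℝ} {C l : ℝ}

lemma exists_energy_mul_rpow_le (hl : 0 < l) {ε : ℝ} (hε : 0 < ε)
    (ha : ∀ t ∈ Set.Ioc (0 : ℝ) 1, HasDerivAt a (t⁻¹ • b t) t)
    (hb : ∀ t ∈ Set.Ioc (0 : ℝ) 1, HasDerivAt b (-g t • a t) t)
    (hg₀ : ∀ t ∈ Set.Ioc (0 : ℝ) 1, 0 ≤ g t)
    (hgC : ∀ t ∈ Set.Ioc (0 : ℝ) 1, g t ≤ C * t ^ (l - 1)) :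
    ∃ K, ∀ t ∈ Set.Ioc (0 : ℝ) 1, (ε ^ 2 * ‖a t‖ ^ 2 + ‖b t‖ ^ 2) * t ^ ε ≤ K := by
  have hC : 0 ≤ C := by simpa using (hg₀ 1 ⟨one_pos, le_rfl⟩).trans (hgC 1 ⟨one_pos, le_rfl⟩)
  set energy := fun t ↦ ε ^ 2 * ‖a t‖ ^ 2 + ‖b t‖ ^ 2
  set v := fun t : ℝ ↦ ε * log t + C / (ε * l) * t ^ l
  have hmono : MonotoneOn (fun t ↦ energy t * exp (v t)) (Set.Ioc 0 1) := by
    refine monotoneOn_mul_exp_of_hasDerivAt (convex_Ioc 0 1)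
      (v' := fun t ↦ ε * t⁻¹ + C * t ^ (l - 1) / ε)
      (fun t ht ↦ ((ha t ht).norm_sq.const_mul _).add (hb t ht).norm_sq) (fun t ht ↦ ?_)
      fun t ht ↦ ?_
    · have h := ((hasDerivAt_log ht.1.ne').const_mul ε).add
        ((hasDerivAt_rpow_const (p := l) (.inl ht.1.ne')).const_mul (C / (ε * l)))
      exact h.congr_deriv (by field_simp)
    · rw [interior_Ioc] at ht
      have ht' : t ∈ Set.Ioc (0 : ℝ) 1 := ⟨ht.1, ht.2.le⟩
      refine le_trans (neg_le_neg (mul_le_mul_of_nonneg_right ?_ (by positivity)))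
        (neg_rate_mul_energy_le_energy_deriv (a t) (b t) hε (inv_nonneg.2 ht.1.le) (hg₀ t ht'))
      gcongr
      exact hgC t ht'
  refine ⟨energy 1 * exp (v 1), fun t ht ↦ le_trans ?_ (hmono ht ⟨one_pos, le_rfl⟩ ht.2)⟩
  have hexp : t ^ ε ≤ exp (v t) := by
    rw [rpow_def_of_pos ht.1, mul_comm]
    gcongr
    simp only [v, le_add_iff_nonneg_right]
    have := rpow_nonneg ht.1.le l
    positivity
  exact mul_le_mul_of_nonneg_left hexp (by positivity)

lemma exists_norm_le_mul_rpow_neg (hl : 0 < l)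
    (ha : ∀ t ∈ Set.Ioc (0 : ℝ) 1, HasDerivAt a (t⁻¹ • b t) t)
    (hb : ∀ t ∈ Set.Ioc (0 : ℝ) 1, HasDerivAt b (-g t • a t) t)
    (hg₀ : ∀ t ∈ Set.Ioc (0 : ℝ) 1, 0 ≤ g t)
    (hgC : ∀ t ∈ Set.Ioc (0 : ℝ) 1, g t ≤ C * t ^ (l - 1)) {ε : ℝ} (hε : 0 < ε) :
    ∃ A, ∀ t ∈ Set.Ioc (0 : ℝ) 1, ‖a t‖ ≤ A * t ^ (-ε) := by
  obtain ⟨K, hK⟩ := exists_energy_mul_rpow_le hl (by positivity : 0 < 2 * ε) ha hb hg₀ hgC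
  refine ⟨√K / (2 * ε), fun t ht ↦ ?_⟩
  have hpow : t ^ (2 * ε) = (t ^ ε) ^ 2 := by
    rw [← rpow_natCast, ← rpow_mul ht.1.le, mul_comm]
    norm_num
  have hsq : (2 * ε * (‖a t‖ * t ^ ε)) ^ 2 ≤ K :=
    calc (2 * ε * (‖a t‖ * t ^ ε)) ^ 2 = (2 * ε) ^ 2 * ‖a t‖ ^ 2 * t ^ (2 * ε) := by
          rw [hpow]; ring
      _ ≤ ((2 * ε) ^ 2 * ‖a t‖ ^ 2 + ‖b t‖ ^ 2) * t ^ (2 * ε) :=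
          mul_le_mul_of_nonneg_right (le_add_of_nonneg_right (sq_nonneg _))
            (rpow_nonneg ht.1.le _)
      _ ≤ K := hK t ht
  have := Real.le_sqrt_of_sq_le hsq
  rw [rpow_neg ht.1.le, ← div_eq_mul_inv, le_div_iff₀ (rpow_pos_of_pos ht.1 ε),
    le_div_iff₀ (by positivity)]
  linarith

theorem exists_tendsto_sub_log_smul [CompleteSpace E] (hl : 0 < l)
    (ha : ∀ t ∈ Set.Ioc (0 : ℝ) 1, HasDerivAt a (t⁻¹ • b t) t)
    (hb : ∀ t ∈ Set.Ioc (0 : ℝ) 1, HasDerivAt b (-g t • a t) t)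
    (hg : ContinuousOn g (Set.Ioc 0 1)) (hg₀ : ∀ t ∈ Set.Ioc (0 : ℝ) 1, 0 ≤ g t)
    (hgC : ∀ t ∈ Set.Ioc (0 : ℝ) 1, g t ≤ C * t ^ (l - 1)) :
    ∃ c₁ c₂ : E, Tendsto (fun t ↦ a t - (log t • c₁ + c₂)) (𝓝[>] 0) (𝓝 0) := by
  have hm : 0 < l / 2 := half_pos hl
  obtain ⟨A, hA⟩ := exists_norm_le_mul_rpow_neg hl ha hb hg₀ hgC hm
  have hb' : ∀ t ∈ Set.Ioc (0 : ℝ) 1, ‖-g t • a t‖ ≤ C * A * t ^ (l / 2 - 1) := fun t ht ↦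
    calc ‖-g t • a t‖ = g t * ‖a t‖ := by rw [norm_smul, norm_neg, norm_of_nonneg (hg₀ t ht)]
      _ ≤ C * t ^ (l - 1) * (A * t ^ (-(l / 2))) :=
        mul_le_mul (hgC t ht) (hA t ht) (norm_nonneg _) ((hg₀ t ht).trans (hgC t ht))
      _ = C * A * t ^ (l / 2 - 1) := by
        rw [mul_mul_mul_comm, ← rpow_add ht.1]
        ring_nf
  obtain ⟨c₁, hc₁⟩ := exists_norm_sub_le_rpow_of_hasDerivAt hm hb
    (fun t ht ↦ (hg.neg t ht).smul (ha t ht).continuousAt.continuousWithinAt) hb'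
  have hd : ∀ t ∈ Set.Ioc (0 : ℝ) 1,
      HasDerivAt (fun t ↦ a t - log t • c₁) (t⁻¹ • (b t - c₁)) t := fun t ht ↦
    ((ha t ht).sub ((hasDerivAt_log ht.1.ne').smul_const c₁)).congr_deriv (smul_sub ..).symm
  have hd' : ∀ t ∈ Set.Ioc (0 : ℝ) 1,
      ‖t⁻¹ • (b t - c₁)‖ ≤ C * A / (l / 2) * t ^ (l / 2 - 1) := fun t ht ↦ by
    rw [norm_smul, norm_inv, norm_of_nonneg ht.1.le, inv_mul_le_iff₀ ht.1,
      rpow_sub_one ht.1.ne', mul_div_assoc', mul_div_cancel₀ _ ht.1.ne']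
    exact hc₁ t ht
  obtain ⟨c₂, hc₂⟩ := exists_norm_sub_le_rpow_of_hasDerivAt hm hd
    (fun t ht ↦ ((continuousAt_inv₀ ht.1.ne').smul
      ((hb t ht).continuousAt.sub continuousAt_const)).continuousWithinAt) hd'
  have hlim : Tendsto (fun t : ℝ ↦ t ^ (l / 2)) (𝓝[>] 0) (𝓝 0) := by
    simpa [zero_rpow hm.ne'] using
      (continuousAt_rpow_const 0 (l / 2) (.inr hm.le)).tendsto.mono_left nhdsWithin_le_nhds
  refine ⟨c₁, c₂, squeeze_zero_norm' ?_ (by simpa using hlim.const_mul (C * A / (l / 2) / (l / 2)))⟩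
  filter_upwards [Ioc_mem_nhdsGT one_pos] with t ht
  rw [← sub_sub]
  exact hc₂ t ht

end ModeSystem

theorem small_time_asymptotics_nonresonant_general (p ω : Fin 3 → ℝ)
    (hsq : ∑ j, (p j) ^ 2 = 1)
    (hω : ∀ j, p j = 1 → ω j = 0)
    (α : ℝ → ℂ)
    (hα : ∀ t > (0:ℝ), DifferentiableAt ℝ α t)
    (hα' : ∀ t > (0:ℝ), DifferentiableAt ℝ (deriv α) t)
    (hode : ∀ t > (0:ℝ), deriv (deriv α) t + deriv α t / (t : ℂ)
        + ((4 * π ^ 2 * ∑ j, (ω j) ^ 2 * t ^ (-(2 * p j)) : ℝ) : ℂ) * α t = 0) :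
    ∃ c₁ c₂ : ℂ,
      Tendsto (fun t : ℝ => α t - (c₁ * (Real.log t : ℂ) + c₂))
        (nhdsWithin 0 (Set.Ioi 0)) (nhds 0) := by
  obtain ⟨l, hl, hgC⟩ := exists_mul_kasnerPotential_le hsq hω
  have ha : ∀ t ∈ Set.Ioc (0 : ℝ) 1, HasDerivAt α (t⁻¹ • ((t : ℂ) * deriv α t)) t :=
    fun t ht ↦ (hα t ht.1).hasDerivAt.congr_deriv <| by
      rw [Complex.real_smul, ← mul_assoc, ← Complex.ofReal_mul, inv_mul_cancel₀ ht.1.ne',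
        Complex.ofReal_one, one_mul]
  obtain ⟨c₁, c₂, h⟩ := exists_tendsto_sub_log_smul (g := fun t ↦ t * kasnerPotential p ω t) hl ha
    (fun t ht ↦ hasDerivAt_ofReal_mul_deriv_of_mode ht.1.ne' (hα' t ht.1) (hode t ht.1))
    (continuousOn_id.mul ((continuousOn_kasnerPotential p ω).mono Set.Ioc_subset_Ioi_self))
    (fun t ht ↦ mul_nonneg ht.1.le (kasnerPotential_nonneg p ω ht.1.le)) hgC
  exact ⟨c₁, c₂, by simpa [Complex.real_smul, mul_comm] using h⟩

theorem small_time_asymptotics_nonresonant (p ω : Fin 3 → ℝ)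
    (hsum : ∑ j, p j = 1) (hsq : ∑ j, (p j) ^ 2 = 1)
    (hω : ∀ j, p j = 1 → ω j = 0)
    (α : ℝ → ℂ)
    (hα : ∀ t > (0:ℝ), DifferentiableAt ℝ α t)
    (hα' : ∀ t > (0:ℝ), DifferentiableAt ℝ (deriv α) t)
    (hode : ∀ t > (0:ℝ), deriv (deriv α) t + deriv α t / (t : ℂ)
        + ((4 * π ^ 2 * ∑ j, (ω j) ^ 2 * t ^ (-(2 * p j)) : ℝ) : ℂ) * α t = 0) :
    ∃ c₁ c₂ : ℂ,
      Tendsto (fun t : ℝ => α t - (c₁ * (Real.log t : ℂ) + c₂))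
        (nhdsWithin 0 (Set.Ioi 0)) (nhds 0) :=
  small_time_asymptotics_nonresonant_general p ω hsq hω α hα hα' hode
end

section
/- Let p = (p₁, p₂, p₃) ∈ ℝ³ satisfy p₁ + p₂ + p₃ = 1 and p₁² + p₂² + p₃² = 1, and suppose p_j = 1 for some index j and ω = (ω₁, ω₂, ω₃) ∈ ℝ³ satisfies ω_j ≠ 0. Let α : (0,∞) → ℂ be twice differentiable and satisfy the mode ODE α''(t) + α'(t)/t + 4π² (Σ_{k=1}^{3} ω_k² t^{-2p_k}) α(t) = 0 for all t > 0. Then there exist constants c₁, c₂ ∈ ℂ such that α(t) − (c₁ e^{2πi ω_j ln t} + c₂ e^{−2πi ω_j ln t}) → 0 as t → 0⁺. -/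
open Real Filter Finset MeasureTheory

/-!
Since `p j = 1` forces the other exponents to vanish, the substitution `t = exp s` turns the
mode equation into `β'' + (a ^ 2 + b * exp (2 * s)) β = 0` for `β = α ∘ exp`, with
`a = 2π ω_j ≠ 0` and `b = 4π² ∑_{k ≠ j} ω_k² ≥ 0`. The energy `‖β'‖² + (a² + b e^{2s}) ‖β‖²`
is nondecreasing in `s`, so `β` stays bounded as `s → -∞`. The variation-of-constants
coefficients of `β` with respect to `e^{± i a s}` then have derivatives `O(e^{2s})`, which are
integrable at `-∞`, so the coefficients converge.
-/

lemma eq_zero_of_sum_sq_eq_one {ι : Type*} [Fintype ι] {p : ι → ℝ} (hsq : ∑ i, p i ^ 2 = 1)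
    {j : ι} (hpj : p j = 1) {k : ι} (hk : k ≠ j) : p k = 0 := by
  classical
  have hrest : ∑ i ∈ univ.erase j, p i ^ 2 = 0 := by
    rw [← add_sum_erase _ _ (mem_univ j), hpj] at hsq
    linarith
  have := (sum_eq_zero_iff_of_nonneg fun i _ => sq_nonneg (p i)).1 hrest k (by simp [hk])
  exact pow_eq_zero_iff two_ne_zero |>.1 this

lemma sq_mul_sum_rpow_eq {ι : Type*} [Fintype ι] [DecidableEq ι] {p : ι → ℝ}
    (hsq : ∑ i, p i ^ 2 = 1) {j : ι} (hpj : p j = 1) (ω : ι → ℝ) {t : ℝ} (ht : 0 < t) :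
    t ^ 2 * ∑ k, ω k ^ 2 * t ^ (-(2 * p k))
      = ω j ^ 2 + (∑ k ∈ univ.erase j, ω k ^ 2) * t ^ 2 := by
  have hrest : ∀ k ∈ univ.erase j, ω k ^ 2 * t ^ (-(2 * p k)) = ω k ^ 2 := fun k hk => by
    simp [eq_zero_of_sum_sq_eq_one hsq hpj (ne_of_mem_erase hk)]
  have hj : t ^ (-(2 * p j)) = (t ^ 2)⁻¹ := by
    rw [hpj, mul_one, rpow_neg ht.le, rpow_two]
  rw [← add_sum_erase _ _ (mem_univ j), sum_congr rfl hrest, hj]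
  field_simp

lemma hasDerivAt_comp_exp {f : ℝ → ℂ} {s : ℝ} (hf : DifferentiableAt ℝ f (exp s)) :
    HasDerivAt (fun s => f (exp s)) (exp s * deriv f (exp s)) s := by
  simpa [Function.comp_def, Complex.real_smul] using hf.hasDerivAt.scomp s (hasDerivAt_exp s)

lemma hasDerivAt_exp_mul_deriv_comp_exp {α : ℝ → ℂ} {V : ℝ → ℝ} {s : ℝ}
    (hα' : DifferentiableAt ℝ (deriv α) (exp s))
    (hode : deriv (deriv α) (exp s) + deriv α (exp s) / (exp s : ℂ)
      + (V (exp s) : ℂ) * α (exp s) = 0) :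
    HasDerivAt (fun s => (exp s : ℂ) * deriv α (exp s))
      (-((exp s ^ 2 * V (exp s) : ℝ) : ℂ) * α (exp s)) s := by
  refine ((hasDerivAt_exp s).ofReal_comp.mul (hasDerivAt_comp_exp hα')).congr_deriv ?_
  have hexp : (exp s : ℂ) ≠ 0 := by exact_mod_cast (exp_pos s).ne'
  field_simp at hode
  rw [Complex.ofReal_mul, Complex.ofReal_pow]
  linear_combination (exp s : ℂ) * hode

lemma norm_sq_le_energy_of_le {a : ℝ} {q q' : ℝ → ℝ} {β γ δ : ℝ → ℂ}
    (hβ : ∀ s, HasDerivAt β (γ s) s) (hγ : ∀ s, HasDerivAt γ (δ s) s)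
    (hode : ∀ s, δ s = -((a : ℂ) ^ 2 + q s) * β s)
    (hq : ∀ s, HasDerivAt q (q' s) s) (hq_nonneg : ∀ s, 0 ≤ q s) (hq'_nonneg : ∀ s, 0 ≤ q' s)
    {s s₀ : ℝ} (hs : s ≤ s₀) :
    a ^ 2 * ‖β s‖ ^ 2 ≤ ‖γ s₀‖ ^ 2 + (a ^ 2 + q s₀) * ‖β s₀‖ ^ 2 := by
  set E : ℝ → ℝ := fun s => ‖γ s‖ ^ 2 + (a ^ 2 + q s) * ‖β s‖ ^ 2
  have hE : ∀ s, HasDerivAt E (q' s * ‖β s‖ ^ 2) s := fun s => by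
    refine ((hγ s).norm_sq.add (((hq s).const_add (a ^ 2)).mul (hβ s).norm_sq)).congr_deriv ?_
    have hδ : δ s = (-(a ^ 2 + q s) : ℝ) • β s := by
      rw [hode, Complex.real_smul]; push_cast; ring
    rw [hδ, real_inner_smul_right, real_inner_comm (β s)]
    ring
  have hmono : Monotone E := monotone_of_deriv_nonneg (fun s => (hE s).differentiableAt)
    fun s => (hE s).deriv ▸ mul_nonneg (hq'_nonneg s) (sq_nonneg _)
  calc a ^ 2 * ‖β s‖ ^ 2 ≤ E s := by
        have := mul_nonneg (hq_nonneg s) (sq_nonneg ‖β s‖)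
        simp only [E]; nlinarith [sq_nonneg ‖γ s‖]
    _ ≤ E s₀ := hmono hs

/-- With `c_A = variationCoeff A β γ`, one has `β = c_A e^{As} + c_{-A} e^{-As}` and, when
`γ = β'`, also `γ = A (c_A e^{As} - c_{-A} e^{-As})`. -/
noncomputable def variationCoeff (A : ℂ) (β γ : ℝ → ℂ) (s : ℝ) : ℂ :=
  (β s + γ s / A) / 2 * Complex.exp (-(A * s))

lemma hasDerivAt_variationCoeff {A : ℂ} (hA : A ≠ 0) {q β γ δ : ℝ → ℂ}
    (hβ : ∀ s, HasDerivAt β (γ s) s) (hγ : ∀ s, HasDerivAt γ (δ s) s)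
    (hode : ∀ s, δ s = (A ^ 2 - q s) * β s) (s : ℝ) :
    HasDerivAt (variationCoeff A β γ) (-(q s * β s / (2 * A)) * Complex.exp (-(A * s))) s := by
  have hexp :
      HasDerivAt (fun s : ℝ => Complex.exp (-(A * s))) (-A * Complex.exp (-(A * s))) s := by
    simpa [mul_comm] using (((hasDerivAt_id (s : ℂ)).const_mul A).neg.cexp).comp_ofReal
  refine ((((hβ s).add ((hγ s).div_const A)).div_const 2).mul hexp).congr_deriv ?_
  simp only [Pi.add_apply, hode]
  field_simp
  ring

lemma sum_variationCoeff_mul_exp_eq {A : ℂ} (hA : A ≠ 0) (β γ : ℝ → ℂ) (s : ℝ) :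
    variationCoeff A β γ s * Complex.exp (A * s)
      + variationCoeff (-A) β γ s * Complex.exp (-(A * s)) = β s := by
  have h : Complex.exp (-(A * s)) * Complex.exp (A * s) = 1 := by
    rw [← Complex.exp_add, neg_add_cancel, Complex.exp_zero]
  simp only [variationCoeff, neg_neg, neg_mul]
  field_simp
  linear_combination (2 * A * β s) * h

lemma norm_exp_mul_ofReal {A : ℂ} (hA : A.re = 0) (s : ℝ) : ‖Complex.exp (A * s)‖ = 1 := by
  simp [Complex.norm_exp, hA]

lemma exists_tendsto_variationCoeff_atBot {A : ℂ} (hA : A ≠ 0) (hA_re : A.re = 0)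
    {q β γ δ : ℝ → ℂ}
    (hβ : ∀ s, HasDerivAt β (γ s) s) (hγ : ∀ s, HasDerivAt γ (δ s) s)
    (hode : ∀ s, δ s = (A ^ 2 - q s) * β s) {s₀ C : ℝ} (hq : IntegrableOn q (Set.Iic s₀))
    (hβ_bdd : ∀ s ≤ s₀, ‖β s‖ ≤ C) :
    ∃ L, Tendsto (variationCoeff A β γ) atBot (nhds L) := by
  set d : ℝ → ℂ := fun s => -(q s * β s / (2 * A)) * Complex.exp (-(A * s))
  have hβ_cont : Continuous β := continuous_iff_continuousAt.2 fun s => (hβ s).continuousAt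
  have hd_meas : AEStronglyMeasurable d (volume.restrict (Set.Iic s₀)) := by
    have := hq.aestronglyMeasurable
    fun_prop
  have hd_int : IntegrableOn d (Set.Iic s₀) := by
    refine (hq.norm.mul_const (C / ‖2 * A‖)).mono' hd_meas ?_
    filter_upwards [ae_restrict_mem measurableSet_Iic] with s hs
    have : ‖Complex.exp (-(A * s))‖ = 1 := by
      rw [← neg_mul]; exact norm_exp_mul_ofReal (by simp [hA_re]) s
    simp only [d, norm_mul, norm_neg, norm_div, this, mul_one]
    rw [mul_div_assoc]
    gcongr
    exact hβ_bdd s hs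
  exact ⟨_, tendsto_limUnder_of_hasDerivAt_of_integrableOn_Iic
    (fun s _ => hasDerivAt_variationCoeff hA hβ hγ hode s) hd_int⟩

lemma exists_tendsto_sub_free_wave_atBot {a : ℝ} (ha : a ≠ 0) {q β γ δ : ℝ → ℂ}
    (hβ : ∀ s, HasDerivAt β (γ s) s) (hγ : ∀ s, HasDerivAt γ (δ s) s)
    (hode : ∀ s, δ s = -((a : ℂ) ^ 2 + q s) * β s) {s₀ C : ℝ}
    (hq : IntegrableOn q (Set.Iic s₀)) (hβ_bdd : ∀ s ≤ s₀, ‖β s‖ ≤ C) :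
    ∃ L₁ L₂ : ℂ, Tendsto (fun s : ℝ => β s - (L₁ * Complex.exp (Complex.I * a * s)
      + L₂ * Complex.exp (-(Complex.I * a * s)))) atBot (nhds 0) := by
  set A : ℂ := Complex.I * a
  have hA : A ≠ 0 := mul_ne_zero Complex.I_ne_zero (Complex.ofReal_ne_zero.2 ha)
  have hA_re : A.re = 0 := by simp [A]
  have hode_A : ∀ s, δ s = (A ^ 2 - q s) * β s := fun s => by
    rw [hode, mul_pow, Complex.I_sq]; ring
  have hode_negA : ∀ s, δ s = ((-A) ^ 2 - q s) * β s := fun s => by rw [neg_sq, hode_A]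
  obtain ⟨L₁, hL₁⟩ := exists_tendsto_variationCoeff_atBot hA hA_re hβ hγ hode_A hq hβ_bdd
  obtain ⟨L₂, hL₂⟩ := exists_tendsto_variationCoeff_atBot (neg_ne_zero.2 hA) (by simp [hA_re])
    hβ hγ hode_negA hq hβ_bdd
  refine ⟨L₁, L₂, squeeze_zero_norm (fun s => ?_)
    (by simpa using (hL₁.sub_const L₁).norm.add (hL₂.sub_const L₂).norm)⟩
  rw [← sum_variationCoeff_mul_exp_eq hA β γ s]
  calc _ = ‖(variationCoeff A β γ s - L₁) * Complex.exp (A * s)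
          + (variationCoeff (-A) β γ s - L₂) * Complex.exp (-(A * s))‖ := by ring_nf
    _ ≤ ‖variationCoeff A β γ s - L₁‖ + ‖variationCoeff (-A) β γ s - L₂‖ := by
      refine (norm_add_le _ _).trans_eq ?_
      rw [norm_mul, norm_mul, norm_exp_mul_ofReal hA_re, ← neg_mul A,
        norm_exp_mul_ofReal (by simp [hA_re]), mul_one, mul_one]

lemma exists_tendsto_sub_free_wave_atBot_of_monotone {a : ℝ} (ha : a ≠ 0) {q q' : ℝ → ℝ}
    {β γ δ : ℝ → ℂ} (hβ : ∀ s, HasDerivAt β (γ s) s) (hγ : ∀ s, HasDerivAt γ (δ s) s)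
    (hode : ∀ s, δ s = -((a : ℂ) ^ 2 + q s) * β s)
    (hq : ∀ s, HasDerivAt q (q' s) s) (hq_nonneg : ∀ s, 0 ≤ q s) (hq'_nonneg : ∀ s, 0 ≤ q' s)
    (hq_int : IntegrableOn q (Set.Iic 0)) :
    ∃ L₁ L₂ : ℂ, Tendsto (fun s : ℝ => β s - (L₁ * Complex.exp (Complex.I * a * s)
      + L₂ * Complex.exp (-(Complex.I * a * s)))) atBot (nhds 0) := by
  refine exists_tendsto_sub_free_wave_atBot ha hβ hγ hode hq_int.ofReal
    (C := √((‖γ 0‖ ^ 2 + (a ^ 2 + q 0) * ‖β 0‖ ^ 2) / a ^ 2)) fun s hs => ?_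
  refine le_sqrt_of_sq_le ((le_div_iff₀' (by positivity)).2 ?_)
  exact norm_sq_le_energy_of_le hβ hγ hode hq hq_nonneg hq'_nonneg hs

theorem small_time_asymptotics_flat_resonant_general (p ω : Fin 3 → ℝ)
    (hsq : ∑ j, (p j) ^ 2 = 1)
    (j : Fin 3) (hpj : p j = 1) (hωj : ω j ≠ 0)
    (α : ℝ → ℂ)
    (hα : ∀ t > (0:ℝ), DifferentiableAt ℝ α t)
    (hα' : ∀ t > (0:ℝ), DifferentiableAt ℝ (deriv α) t)
    (hode : ∀ t > (0:ℝ), deriv (deriv α) t + deriv α t / (t : ℂ)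
        + ((4 * π ^ 2 * ∑ k, (ω k) ^ 2 * t ^ (-(2 * p k)) : ℝ) : ℂ) * α t = 0) :
    ∃ c₁ c₂ : ℂ,
      Tendsto (fun t : ℝ => α t
          - (c₁ * Complex.exp (2 * π * Complex.I * (ω j) * (Real.log t : ℂ))
            + c₂ * Complex.exp (-(2 * π * Complex.I * (ω j) * (Real.log t : ℂ)))))
        (nhdsWithin 0 (Set.Ioi 0)) (nhds 0) := by
  set b := 4 * π ^ 2 * ∑ k ∈ univ.erase j, ω k ^ 2
  have hb : 0 ≤ b := by positivity
  have hpot : ∀ s, exp s ^ 2 * (4 * π ^ 2 * ∑ k, ω k ^ 2 * exp s ^ (-(2 * p k)))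
      = (2 * π * ω j) ^ 2 + b * exp (2 * s) := fun s => by
    rw [mul_left_comm, sq_mul_sum_rpow_eq hsq hpj ω (exp_pos s), ← exp_nat_mul]
    push_cast; ring
  have hmode : ∀ s, HasDerivAt (fun s => (exp s : ℂ) * deriv α (exp s))
      (-(((2 * π * ω j : ℝ) : ℂ) ^ 2 + ((b * exp (2 * s) : ℝ) : ℂ)) * α (exp s)) s := fun s => by
    have := hasDerivAt_exp_mul_deriv_comp_exp (hα' _ (exp_pos s))
      (V := fun t => 4 * π ^ 2 * ∑ k, ω k ^ 2 * t ^ (-(2 * p k))) (hode _ (exp_pos s))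
    rwa [hpot, Complex.ofReal_add, Complex.ofReal_pow] at this
  obtain ⟨c₁, c₂, hc⟩ := exists_tendsto_sub_free_wave_atBot_of_monotone
    (mul_ne_zero (by positivity) hωj) (fun s => hasDerivAt_comp_exp (hα _ (exp_pos s))) hmode
    (fun s => rfl) (fun s => (((hasDerivAt_id s).const_mul 2).exp).const_mul b)
    (fun s => by positivity) (fun s => by positivity)
    ((integrableOn_exp_mul_Iic two_pos 0).const_mul b)
  refine ⟨c₁, c₂, (hc.comp tendsto_log_nhdsGT_zero).congr' ?_⟩
  filter_upwards [self_mem_nhdsWithin] with t ht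
  simp only [Function.comp_apply, exp_log ht]
  push_cast
  ring_nf

theorem small_time_asymptotics_flat_resonant (p ω : Fin 3 → ℝ)
    (hsum : ∑ j, p j = 1) (hsq : ∑ j, (p j) ^ 2 = 1)
    (j : Fin 3) (hpj : p j = 1) (hωj : ω j ≠ 0)
    (α : ℝ → ℂ)
    (hα : ∀ t > (0:ℝ), DifferentiableAt ℝ α t)
    (hα' : ∀ t > (0:ℝ), DifferentiableAt ℝ (deriv α) t)
    (hode : ∀ t > (0:ℝ), deriv (deriv α) t + deriv α t / (t : ℂ)
        + ((4 * π ^ 2 * ∑ k, (ω k) ^ 2 * t ^ (-(2 * p k)) : ℝ) : ℂ) * α t = 0) :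
    ∃ c₁ c₂ : ℂ,
      Tendsto (fun t : ℝ => α t
          - (c₁ * Complex.exp (2 * π * Complex.I * (ω j) * (Real.log t : ℂ))
            + c₂ * Complex.exp (-(2 * π * Complex.I * (ω j) * (Real.log t : ℂ)))))
        (nhdsWithin 0 (Set.Ioi 0)) (nhds 0) :=
  small_time_asymptotics_flat_resonant_general p ω hsq j hpj hωj α hα hα' hode
end

section
/- Let p = (p₁, p₂, p₃) ∈ ℝ³ satisfy p₁ + p₂ + p₃ = 1 and p₁² + p₂² + p₃² = 1, and let ω = (ω₁, ω₂, ω₃) ∈ ℝ³ be such that there is an index j with ω_j ≠ 0 and p_j < 1. Define K_ω(s) := 4π² Σ_{j=1}^{3} ω_j² e^{(2−2p_j)s}. Then for every a ∈ ℝ: (i) the function ψ(s) := K_ω(s)^{-1/4} · (d²/ds²)(K_ω(s)^{-1/4}) is integrable on (a, ∞), and (ii) the function s ↦ K_ω(s)^{1/2} is not integrable on (a, ∞). -/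
/-!
Write `K_ω(s) = ∑ₖ wₖ e^{cₖ s}` with `wₖ = 4π²ωₖ² ≥ 0` and `cₖ = 2 − 2pₖ`. If `|cₖ| ≤ C` for all `k`,
then `|K'| ≤ C K` and `|K''| ≤ C² K`, while `K(s) ≥ wⱼ e^{cⱼ s}` with `wⱼ, cⱼ > 0`. For `r < 0`,
`K^r (K^r)'' = r K'' K^{2r-1} + r(r-1) K'² K^{2r-2}` is therefore `O(K^{2r}) = O(e^{2r cⱼ s})`,
which is integrable on `(a, ∞)`; and `K^{1/2} ≥ (wⱼ e^{cⱼ a})^{1/2} > 0` there, so it is not.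
-/

open Real Finset MeasureTheory Set

section RpowDeriv

variable {K K' K'' : ℝ → ℝ} {r : ℝ}

theorem deriv_deriv_rpow_const (hK : ∀ s, HasDerivAt K (K' s) s)
    (hK' : ∀ s, HasDerivAt K' (K'' s) s) (hpos : ∀ s, 0 < K s) (s : ℝ) :
    deriv (deriv fun u => K u ^ r) s
      = r * K'' s * K s ^ (r - 1) + r * (r - 1) * K' s ^ 2 * K s ^ (r - 2) := by
  have hderiv : deriv (fun u => K u ^ r) = fun u => K' u * r * K u ^ (r - 1) :=
    funext fun u => ((hK u).rpow_const (Or.inl (hpos u).ne')).deriv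
  have h := ((hK' s).mul_const r).fun_mul ((hK s).rpow_const (p := r - 1) (Or.inl (hpos s).ne'))
  rw [hderiv, h.deriv, show r - 1 - 1 = r - 2 by ring]
  ring

theorem abs_rpow_mul_second_deriv_le {x a₁ a₂ C D : ℝ} (hx : 0 < x) (h₁ : |a₁| ≤ C * x)
    (h₂ : |a₂| ≤ D * x) :
    |x ^ r * (r * a₂ * x ^ (r - 1) + r * (r - 1) * a₁ ^ 2 * x ^ (r - 2))|
      ≤ (|r| * D + |r * (r - 1)| * C ^ 2) * x ^ (2 * r) := by
  have e₁ : x ^ r * x ^ (r - 1) * x = x ^ (2 * r) := by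
    rw [← rpow_add hx, ← rpow_add_one hx.ne']; ring_nf
  have e₂ : x ^ r * x ^ (r - 2) * x ^ 2 = x ^ (2 * r) := by
    rw [← rpow_add hx, ← rpow_natCast, ← rpow_add hx]; ring_nf
  have hsq : a₁ ^ 2 ≤ C ^ 2 * x ^ 2 := by
    rw [← sq_abs, ← mul_pow]; exact pow_le_pow_left₀ (abs_nonneg _) h₁ 2
  have p₁ : 0 ≤ x ^ r * x ^ (r - 1) := by positivity
  have p₂ : 0 ≤ x ^ r * x ^ (r - 2) := by positivity
  calc |x ^ r * (r * a₂ * x ^ (r - 1) + r * (r - 1) * a₁ ^ 2 * x ^ (r - 2))|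
      = |r * a₂ * (x ^ r * x ^ (r - 1)) + r * (r - 1) * a₁ ^ 2 * (x ^ r * x ^ (r - 2))| := by
        ring_nf
    _ ≤ |r| * |a₂| * (x ^ r * x ^ (r - 1))
          + |r * (r - 1)| * a₁ ^ 2 * (x ^ r * x ^ (r - 2)) := by
        refine (abs_add_le _ _).trans (le_of_eq ?_)
        simp only [abs_mul, abs_of_nonneg p₁, abs_of_nonneg p₂, abs_pow, sq_abs]
    _ ≤ |r| * (D * x) * (x ^ r * x ^ (r - 1))
          + |r * (r - 1)| * (C ^ 2 * x ^ 2) * (x ^ r * x ^ (r - 2)) := by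
        gcongr
    _ = |r| * D * (x ^ r * x ^ (r - 1) * x)
          + |r * (r - 1)| * C ^ 2 * (x ^ r * x ^ (r - 2) * x ^ 2) := by
        ring
    _ = (|r| * D + |r * (r - 1)| * C ^ 2) * x ^ (2 * r) := by
        rw [e₁, e₂]; ring

theorem integrableOn_Ioi_rpow_mul_deriv_deriv_rpow {C D A ε : ℝ}
    (hK : ∀ s, HasDerivAt K (K' s) s) (hK' : ∀ s, HasDerivAt K' (K'' s) s)
    (h₁ : ∀ s, |K' s| ≤ C * K s) (h₂ : ∀ s, |K'' s| ≤ D * K s) (hr : r < 0) (hA : 0 < A)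
    (hε : 0 < ε) (hlow : ∀ s, A * exp (ε * s) ≤ K s) (a : ℝ) :
    IntegrableOn (fun s => K s ^ r * deriv (deriv fun u => K u ^ r) s) (Ioi a) := by
  have hpos : ∀ s, 0 < K s := fun s => (by positivity : 0 < A * exp (ε * s)).trans_le (hlow s)
  have hKc : Continuous K := continuous_iff_continuousAt.2 fun s => (hK s).continuousAt
  set M := |r| * D + |r * (r - 1)| * C ^ 2
  have hD : 0 ≤ D := nonneg_of_mul_nonneg_left ((abs_nonneg _).trans (h₂ 0)) (hpos 0)
  have hM : 0 ≤ M := by positivity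
  have hdecay (s : ℝ) : K s ^ (2 * r) ≤ A ^ (2 * r) * exp (2 * r * ε * s) := calc
    K s ^ (2 * r) ≤ (A * exp (ε * s)) ^ (2 * r) :=
      rpow_le_rpow_of_nonpos (by positivity) (hlow s) (by linarith)
    _ = A ^ (2 * r) * exp (2 * r * ε * s) := by
      rw [mul_rpow hA.le (exp_pos _).le, ← exp_mul]; ring_nf
  have hdom : IntegrableOn (fun s => M * A ^ (2 * r) * exp (2 * r * ε * s)) (Ioi a) :=
    (integrableOn_exp_mul_Ioi (by nlinarith) a).const_mul _
  refine hdom.mono' ?_ (ae_of_all _ fun s => ?_)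
  · exact ((hKc.measurable.pow_const r).mul (measurable_deriv _)).aestronglyMeasurable
  · rw [norm_eq_abs, deriv_deriv_rpow_const hK hK' hpos]
    exact (abs_rpow_mul_second_deriv_le (hpos s) (h₁ s) (h₂ s)).trans
      ((mul_le_mul_of_nonneg_left (hdecay s) hM).trans_eq (mul_assoc _ _ _).symm)

end RpowDeriv

theorem not_integrableOn_Ioi_of_pos_le {f : ℝ → ℝ} {c a : ℝ} (hc : 0 < c)
    (h : ∀ s ∈ Ioi a, c ≤ f s) : ¬ IntegrableOn f (Ioi a) := by
  intro hf
  have hconst : IntegrableOn (fun _ => c) (Ioi a) :=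
    hf.mono' aestronglyMeasurable_const <| ae_restrict_of_forall_mem measurableSet_Ioi
      fun s hs => by rw [norm_of_nonneg hc.le]; exact h s hs
  simp [integrableOn_const_iff, hc.ne'] at hconst

theorem not_integrableOn_Ioi_rpow_of_mul_exp_le {K : ℝ → ℝ} {r A ε : ℝ} (hr : 0 < r)
    (hA : 0 < A) (hε : 0 ≤ ε) (hlow : ∀ s, A * exp (ε * s) ≤ K s) (a : ℝ) :
    ¬ IntegrableOn (fun s => K s ^ r) (Ioi a) := by
  refine not_integrableOn_Ioi_of_pos_le (by positivity : 0 < (A * exp (ε * a)) ^ r) fun s hs => ?_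
  have hexp : A * exp (ε * a) ≤ A * exp (ε * s) := by gcongr; exact hs.le
  exact rpow_le_rpow (by positivity) (hexp.trans (hlow s)) hr.le

section ExpSum

variable {ι : Type*} [Fintype ι] {w c : ι → ℝ}

noncomputable def expSum (w c : ι → ℝ) (s : ℝ) : ℝ := ∑ k, w k * exp (c k * s)

theorem hasDerivAt_expSum (s : ℝ) :
    HasDerivAt (expSum w c) (expSum (fun k => w k * c k) c s) s := by
  have h := HasDerivAt.fun_sum (u := univ) fun k _ =>
    (((hasDerivAt_id s).const_mul (c k)).exp).const_mul (w k)
  unfold expSum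
  simpa [mul_comm, mul_left_comm, mul_assoc] using h

theorem abs_expSum_le {u : ι → ℝ} {C : ℝ} (hu : ∀ k, |u k| ≤ C * w k) (s : ℝ) :
    |expSum u c s| ≤ C * expSum w c s := by
  rw [expSum, expSum, mul_sum]
  refine (abs_sum_le_sum_abs _ _).trans (sum_le_sum fun k _ => ?_)
  rw [abs_mul, abs_of_pos (exp_pos _), ← mul_assoc]
  exact mul_le_mul_of_nonneg_right (hu k) (exp_pos _).le

theorem mul_exp_le_expSum (hw : ∀ k, 0 ≤ w k) (j : ι) (s : ℝ) :
    w j * exp (c j * s) ≤ expSum w c s :=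
  single_le_sum (f := fun k => w k * exp (c k * s))
    (fun k _ => mul_nonneg (hw k) (exp_pos _).le) (mem_univ j)

theorem integrableOn_Ioi_expSum_rpow_mul_deriv_deriv {r : ℝ} (hr : r < 0) (hw : ∀ k, 0 ≤ w k)
    {j : ι} (hwj : 0 < w j) (hcj : 0 < c j) (a : ℝ) :
    IntegrableOn (fun s => expSum w c s ^ r * deriv (deriv fun u => expSum w c u ^ r) s)
      (Ioi a) := by
  obtain ⟨C, hC⟩ := Finite.exists_le fun k => |c k|
  have h₁ (k : ι) : |w k * c k| ≤ C * w k := by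
    rw [abs_mul, abs_of_nonneg (hw k), mul_comm C]
    exact mul_le_mul_of_nonneg_left (hC k) (hw k)
  have h₂ (k : ι) : |w k * c k * c k| ≤ C ^ 2 * w k := by
    rw [abs_mul, abs_mul, abs_of_nonneg (hw k), sq, mul_comm (C * C), mul_assoc]
    exact mul_le_mul_of_nonneg_left (mul_le_mul (hC k) (hC k) (abs_nonneg _)
      ((abs_nonneg _).trans (hC k))) (hw k)
  exact integrableOn_Ioi_rpow_mul_deriv_deriv_rpow hasDerivAt_expSum hasDerivAt_expSum
    (abs_expSum_le h₁) (abs_expSum_le h₂) hr hwj hcj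
    (mul_exp_le_expSum hw j) a

theorem not_integrableOn_Ioi_expSum_rpow {r : ℝ} (hr : 0 < r) (hw : ∀ k, 0 ≤ w k) {j : ι}
    (hwj : 0 < w j) (hcj : 0 < c j) (a : ℝ) :
    ¬ IntegrableOn (fun s => expSum w c s ^ r) (Ioi a) :=
  not_integrableOn_Ioi_rpow_of_mul_exp_le hr hwj hcj.le (mul_exp_le_expSum hw j) a

end ExpSum

theorem wkb_hypotheses_hold_for_kasner_general (p ω : Fin 3 → ℝ)
    (j : Fin 3) (hωj : ω j ≠ 0) (hpj : p j < 1) :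
    ∀ a : ℝ,
      IntegrableOn
        (fun s : ℝ =>
          (4 * π ^ 2 * ∑ k, (ω k) ^ 2 * Real.exp ((2 - 2 * p k) * s)) ^ (-(1:ℝ)/4)
            * deriv (deriv (fun u : ℝ =>
                (4 * π ^ 2 * ∑ k, (ω k) ^ 2 * Real.exp ((2 - 2 * p k) * u)) ^ (-(1:ℝ)/4))) s)
        (Set.Ioi a) ∧
      ¬ IntegrableOn
        (fun s : ℝ =>
          (4 * π ^ 2 * ∑ k, (ω k) ^ 2 * Real.exp ((2 - 2 * p k) * s)) ^ ((1:ℝ)/2))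
        (Set.Ioi a) := by
  intro a
  set w : Fin 3 → ℝ := fun k => 4 * π ^ 2 * ω k ^ 2
  set c : Fin 3 → ℝ := fun k => 2 - 2 * p k
  have hK : (fun s => 4 * π ^ 2 * ∑ k, ω k ^ 2 * exp ((2 - 2 * p k) * s)) = expSum w c := by
    funext s; simp only [expSum, w, c, mul_sum, mul_assoc]
  have hw (k : Fin 3) : 0 ≤ w k := by positivity
  have hwj : 0 < w j := by positivity
  have hcj : 0 < c j := by simp only [c]; linarith
  have key := And.intro
    (integrableOn_Ioi_expSum_rpow_mul_deriv_deriv (r := -(1:ℝ)/4) (by norm_num) hw hwj hcj a)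
    (not_integrableOn_Ioi_expSum_rpow (r := (1:ℝ)/2) (by norm_num) hw hwj hcj a)
  rw [← hK] at key
  exact key

theorem wkb_hypotheses_hold_for_kasner (p ω : Fin 3 → ℝ)
    (hsum : ∑ j, p j = 1) (hsq : ∑ j, (p j) ^ 2 = 1)
    (j : Fin 3) (hωj : ω j ≠ 0) (hpj : p j < 1) :
    ∀ a : ℝ,
      IntegrableOn
        (fun s : ℝ =>
          (4 * π ^ 2 * ∑ k, (ω k) ^ 2 * Real.exp ((2 - 2 * p k) * s)) ^ (-(1:ℝ)/4)
            * deriv (deriv (fun u : ℝ =>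
                (4 * π ^ 2 * ∑ k, (ω k) ^ 2 * Real.exp ((2 - 2 * p k) * u)) ^ (-(1:ℝ)/4))) s)
        (Set.Ioi a) ∧
      ¬ IntegrableOn
        (fun s : ℝ =>
          (4 * π ^ 2 * ∑ k, (ω k) ^ 2 * Real.exp ((2 - 2 * p k) * s)) ^ ((1:ℝ)/2))
        (Set.Ioi a) :=
  wkb_hypotheses_hold_for_kasner_general p ω j hωj hpj
end

section
/- Let p = (p₁, p₂, p₃) ∈ ℝ³ satisfy p₁ + p₂ + p₃ = 1 and p₁² + p₂² + p₃² = 1, let ω = (ω₁, ω₂, ω₃) ∈ ℝ³ with ω ≠ 0, and let α : (0,∞) → ℂ be twice differentiable and satisfy the mode ODE α''(t) + α'(t)/t + 4π² (Σ_{j=1}^{3} ω_j² t^{-2p_j}) α(t) = 0 for all t > 0. Then there exist constants C ≥ 0 and T > 0 such that |α(t)| ≤ C · (Σ_{j=1}^{3} ω_j² t^{2−2p_j})^{-1/4} for all t ≥ T. -/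
/-
Put `w = t α'` and `Q = 4π² ∑ ω_j² t^(2 - 2p_j)`. The mode equation becomes `α' = w / t`,
`w' = -(Q / t) α`, which is `α'' + Q α = 0` in the variable `log t`. With `r = √Q`, the
Liouville–Green energy `r ‖α‖² + ‖w‖² / r + k ⟪α, w⟫`, corrected by `k = t r' / r²`, has
derivative `k' ⟪α, w⟫`. Since `Q` is a nonnegative combination of powers `t^(a_j)` with
`a_j = 2 - 2p_j ≥ 0` (as `p_j² ≤ 1`), one has `|k'| ≤ c · (-(1 / r)')` and `k → 0`; a Grönwall
argument with the weight `exp (c / r)` then bounds the energy, so `√Q ‖α‖²` stays bounded.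
-/

open Real Finset Filter
open scoped RealInnerProductSpace

noncomputable section

namespace ModeAmplitude

theorem mul_exp_le_of_deriv_add_mul_nonpos {G G' H H' : ℝ → ℝ} {T : ℝ}
    (hG : ∀ t ≥ T, HasDerivAt G (G' t) t) (hH : ∀ t ≥ T, HasDerivAt H (H' t) t)
    (hle : ∀ t ≥ T, G' t + H' t * G t ≤ 0) {t : ℝ} (ht : T ≤ t) :
    G t * exp (H t) ≤ G T * exp (H T) := by
  have hderiv : ∀ t ≥ T, HasDerivAt (fun s => G s * exp (H s))
      (exp (H t) * (G' t + H' t * G t)) t := fun t ht =>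
    ((hG t ht).mul (hH t ht).exp).congr_deriv (by ring)
  refine antitoneOn_of_hasDerivWithinAt_nonpos (convex_Ici T)
    (fun t ht => (hderiv t ht).continuousAt.continuousWithinAt)
    (fun t ht => (hderiv t (interior_subset ht).out).hasDerivWithinAt)
    (fun t ht => mul_nonpos_of_nonneg_of_nonpos (exp_pos _).le (hle t (interior_subset ht).out))
    Set.self_mem_Ici ht ht

theorem le_sqrt_mul_rpow_of_sqrt_mul_sq_le {Q x M : ℝ} (hQ : 0 < Q)
    (h : √Q * x ^ 2 ≤ M) : x ≤ √M * Q ^ (-(1 : ℝ) / 4) := by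
  have hQ4 : 0 < Q ^ (1 / 4 : ℝ) := rpow_pos_of_pos hQ _
  have hsq : (Q ^ (1 / 4 : ℝ)) ^ 2 = √Q := by
    rw [sqrt_eq_rpow, ← rpow_natCast, ← rpow_mul hQ.le]
    norm_num
  rw [neg_div, rpow_neg hQ.le, ← div_eq_mul_inv, le_div_iff₀ hQ4]
  exact le_sqrt_of_sq_le (by rw [mul_pow, hsq]; linarith)

section Energy

variable {E : Type*} [NormedAddCommGroup E] [InnerProductSpace ℝ E]

theorem two_mul_abs_inner_le {r : ℝ} (hr : 0 < r) (u v : E) :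
    2 * |⟪u, v⟫| ≤ r * ‖u‖ ^ 2 + ‖v‖ ^ 2 / r := by
  have hsq : r * ‖u‖ ^ 2 + ‖v‖ ^ 2 / r - 2 * (‖u‖ * ‖v‖) = (r * ‖u‖ - ‖v‖) ^ 2 / r := by
    field_simp
    ring
  calc 2 * |⟪u, v⟫| ≤ 2 * (‖u‖ * ‖v‖) := by gcongr; exact abs_real_inner_le_norm u v
    _ ≤ r * ‖u‖ ^ 2 + ‖v‖ ^ 2 / r := by
      rw [← sub_nonneg, hsq]
      positivity

def correctedEnergy (r k : ℝ → ℝ) (y w : ℝ → E) (t : ℝ) : ℝ :=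
  r t * ‖y t‖ ^ 2 + ‖w t‖ ^ 2 / r t + k t * ⟪y t, w t⟫

variable {r k : ℝ → ℝ} {y w : ℝ → E}

theorem hasDerivAt_correctedEnergy {t r' k' : ℝ} (ht : t ≠ 0) (hr0 : r t ≠ 0)
    (hr : HasDerivAt r r' t) (hk : HasDerivAt k k' t) (hk_eq : k t = t * r' / r t ^ 2)
    (hy : HasDerivAt y (t⁻¹ • w t) t) (hw : HasDerivAt w (-(r t ^ 2 / t) • y t) t) :
    HasDerivAt (correctedEnergy r k y w) (k' * ⟪y t, w t⟫) t := by
  have h := ((hr.mul hy.norm_sq).add (hw.norm_sq.div hr hr0)).add (hk.mul (hy.inner ℝ hw))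
  refine h.congr_deriv ?_
  simp only [inner_smul_right, real_inner_self_eq_norm_sq, real_inner_comm (w t), hk_eq]
  field_simp
  ring

theorem correctedEnergy_lower_bounds {t : ℝ} (hr : 0 < r t) (hk : |k t| ≤ 1) :
    r t * ‖y t‖ ^ 2 ≤ 2 * correctedEnergy r k y w t ∧ |⟪y t, w t⟫| ≤ correctedEnergy r k y w t := by
  have hcs := two_mul_abs_inner_le hr (y t) (w t)
  have hk_inner : |k t * ⟪y t, w t⟫| ≤ |⟪y t, w t⟫| := by
    rw [abs_mul]
    exact mul_le_of_le_one_left (abs_nonneg _) hk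
  have := neg_abs_le (k t * ⟪y t, w t⟫)
  have : 0 ≤ ‖w t‖ ^ 2 / r t := by positivity
  constructor <;> · unfold correctedEnergy; linarith

theorem exists_mul_norm_sq_le {r' k' : ℝ → ℝ} {T c : ℝ} (hT : 0 < T) (hc : 0 ≤ c)
    (hr : ∀ t ≥ T, 0 < r t) (hr' : ∀ t ≥ T, HasDerivAt r (r' t) t)
    (hk : ∀ t ≥ T, HasDerivAt k (k' t) t) (hk_eq : ∀ t ≥ T, k t = t * r' t / r t ^ 2)
    (hk_le : ∀ t ≥ T, |k t| ≤ 1) (hk' : ∀ t ≥ T, |k' t| ≤ c * r' t / r t ^ 2)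
    (hy : ∀ t ≥ T, HasDerivAt y (t⁻¹ • w t) t)
    (hw : ∀ t ≥ T, HasDerivAt w (-(r t ^ 2 / t) • y t) t) :
    ∃ M, ∀ t ≥ T, r t * ‖y t‖ ^ 2 ≤ M := by
  have hE : ∀ t ≥ T, HasDerivAt (correctedEnergy r k y w) (k' t * ⟪y t, w t⟫) t := fun t ht =>
    hasDerivAt_correctedEnergy (hT.trans_le ht).ne' (hr t ht).ne' (hr' t ht) (hk t ht) (hk_eq t ht)
      (hy t ht) (hw t ht)
  -- `c / r` is a Lyapunov weight: its derivative `-c r' / r²` dominates `|k'|`.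
  have hH : ∀ t ≥ T, HasDerivAt (fun s => c / r s) (-(c * r' t / r t ^ 2)) t := fun t ht =>
    ((hasDerivAt_const t c).div (hr' t ht) (hr t ht).ne').congr_deriv (by ring)
  have hdecr : ∀ t ≥ T,
      k' t * ⟪y t, w t⟫ + -(c * r' t / r t ^ 2) * correctedEnergy r k y w t ≤ 0 := by
    intro t ht
    have hinner := (correctedEnergy_lower_bounds (y := y) (w := w) (hr t ht) (hk_le t ht)).2
    have : k' t * ⟪y t, w t⟫ ≤ c * r' t / r t ^ 2 * correctedEnergy r k y w t :=
      calc k' t * ⟪y t, w t⟫ ≤ |k' t| * |⟪y t, w t⟫| := by rw [← abs_mul]; exact le_abs_self _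
        _ ≤ c * r' t / r t ^ 2 * correctedEnergy r k y w t :=
          mul_le_mul (hk' t ht) hinner (abs_nonneg _) ((abs_nonneg _).trans (hk' t ht))
    linarith
  refine ⟨2 * (correctedEnergy r k y w T * exp (c / r T)), fun t ht => ?_⟩
  obtain ⟨hbound, hinner⟩ := correctedEnergy_lower_bounds (y := y) (w := w) (hr t ht) (hk_le t ht)
  have hexp : 1 ≤ exp (c / r t) := one_le_exp (div_nonneg hc (hr t ht).le)
  have hgron := mul_exp_le_of_deriv_add_mul_nonpos hE hH hdecr ht
  nlinarith [abs_nonneg ⟪y t, w t⟫]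

end Energy

section PowerSum

variable {ι : Type*} [Fintype ι] {b a : ι → ℝ} {t : ℝ}

def powerSum (b a : ι → ℝ) (t : ℝ) : ℝ := ∑ j, b j * t ^ a j

theorem powerSum_nonneg (hb : 0 ≤ b) (ht : 0 ≤ t) : 0 ≤ powerSum b a t :=
  sum_nonneg fun j _ => mul_nonneg (hb j) (rpow_nonneg ht _)

theorem powerSum_pos (hb : 0 ≤ b) (hb0 : b ≠ 0) (ht : 0 < t) : 0 < powerSum b a t := by
  obtain ⟨j, hj⟩ := Function.ne_iff.mp hb0
  exact sum_pos' (fun i _ => mul_nonneg (hb i) (rpow_nonneg ht.le _))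
    ⟨j, mem_univ j, mul_pos ((hb j).lt_of_ne' hj) (rpow_pos_of_pos ht _)⟩

theorem hasDerivAt_powerSum (ht : 0 < t) :
    HasDerivAt (powerSum b a) (powerSum (b * a) a t / t) t := by
  have h := HasDerivAt.fun_sum fun j (_ : j ∈ univ) =>
    (hasDerivAt_rpow_const (p := a j) (Or.inl ht.ne')).const_mul (b j)
  refine h.congr_deriv ?_
  simp only [powerSum, sum_div, Pi.mul_apply, rpow_sub_one ht.ne']
  exact sum_congr rfl fun j _ => by ring

theorem powerSum_mul_le (hb : 0 ≤ b) (ha : 0 ≤ a) (ht : 0 ≤ t) :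
    powerSum (b * a) a t ≤ (∑ j, a j) * powerSum b a t := by
  simp only [powerSum, mul_sum, Pi.mul_apply]
  refine sum_le_sum fun j _ => ?_
  have := single_le_sum (fun i _ => ha i) (mem_univ j)
  have := mul_nonneg (hb j) (rpow_nonneg ht (a j))
  nlinarith

theorem tendsto_powerSum_atTop (hb : 0 ≤ b) {j : ι} (hbj : 0 < b j) (haj : 0 < a j) :
    Tendsto (powerSum b a) atTop atTop := by
  refine tendsto_atTop_mono' atTop ?_ ((tendsto_rpow_atTop haj).const_mul_atTop hbj)
  filter_upwards [eventually_ge_atTop 0] with t ht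
  exact single_le_sum (f := fun i => b i * t ^ a i)
    (fun i _ => mul_nonneg (hb i) (rpow_nonneg ht _)) (mem_univ j)

-- This is `t r' / r²` for `r = √(powerSum b a)`.
def corrector (b a : ι → ℝ) (t : ℝ) : ℝ :=
  powerSum (b * a) a t / (2 * √(powerSum b a t) ^ 3)

theorem hasDerivAt_sqrt_powerSum (hb : 0 ≤ b) (hb0 : b ≠ 0) (ht : 0 < t) :
    HasDerivAt (fun s => √(powerSum b a s))
      (powerSum (b * a) a t / (2 * t * √(powerSum b a t))) t :=
  ((hasDerivAt_powerSum ht).sqrt (powerSum_pos hb hb0 ht).ne').congr_deriv (by ring)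

theorem hasDerivAt_corrector (hb : 0 ≤ b) (hb0 : b ≠ 0) (ht : 0 < t) :
    HasDerivAt (corrector b a)
      ((2 * powerSum (b * a * a) a t * powerSum b a t - 3 * powerSum (b * a) a t ^ 2) /
        (4 * t * √(powerSum b a t) ^ 5)) t := by
  have hr : 0 < √(powerSum b a t) := sqrt_pos.2 (powerSum_pos hb hb0 ht)
  have h := (hasDerivAt_powerSum (b := b * a) (a := a) ht).div
    (((hasDerivAt_sqrt_powerSum hb hb0 ht).fun_pow 3).const_mul 2)
    (mul_ne_zero two_ne_zero (pow_ne_zero 3 hr.ne'))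
  refine h.congr_deriv ?_
  have hQr : powerSum b a t = √(powerSum b a t) ^ 2 := (sq_sqrt (powerSum_pos hb hb0 ht).le).symm
  generalize √(powerSum b a t) = r at hr hQr ⊢
  rw [hQr]
  field_simp
  ring

theorem abs_deriv_corrector_le (hb : 0 ≤ b) (hb0 : b ≠ 0) (ha : 0 ≤ a) (ht : 0 < t) :
    |(2 * powerSum (b * a * a) a t * powerSum b a t - 3 * powerSum (b * a) a t ^ 2) /
        (4 * t * √(powerSum b a t) ^ 5)| ≤
      3 * (∑ j, a j) / 2 *
        (powerSum (b * a) a t / (2 * t * √(powerSum b a t))) / √(powerSum b a t) ^ 2 := by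
  set Q := powerSum b a t
  set P := powerSum (b * a) a t
  have hQ : 0 < Q := powerSum_pos hb hb0 ht
  have hr : 0 < √Q := sqrt_pos.2 hQ
  have hba : 0 ≤ b * a := mul_nonneg hb ha
  have hP : 0 ≤ P := powerSum_nonneg hba ht.le
  have hPQ : P ≤ (∑ j, a j) * Q := powerSum_mul_le hb ha ht.le
  have hRP := powerSum_mul_le hba ha ht.le
  have hR := powerSum_nonneg (a := a) (mul_nonneg hba ha) ht.le
  have hnum : |2 * powerSum (b * a * a) a t * Q - 3 * P ^ 2| ≤ 3 * (∑ j, a j) * P * Q :=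
    abs_sub_le_of_nonneg_of_le (by positivity) (by nlinarith) (by positivity) (by nlinarith)
  rw [abs_div, abs_of_pos (by positivity : 0 < 4 * t * √Q ^ 5), div_le_iff₀ (by positivity)]
  refine hnum.trans_eq ?_
  have hQr : Q = √Q ^ 2 := (sq_sqrt hQ.le).symm
  generalize √Q = r at hr hQr ⊢
  rw [hQr]
  field_simp
  ring

theorem eventually_abs_corrector_le_one (hb : 0 ≤ b) (ha : 0 ≤ a) :
    ∀ᶠ t in atTop, |corrector b a t| ≤ 1 := by
  by_cases hgrow : ∃ j, 0 < b j ∧ 0 < a j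
  · obtain ⟨j, hbj, haj⟩ := hgrow
    filter_upwards [eventually_gt_atTop 0,
      (tendsto_powerSum_atTop hb hbj haj).eventually_ge_atTop (((∑ j, a j) / 2) ^ 2)]
      with t ht hlarge
    have hQ : 0 < powerSum b a t := powerSum_pos hb (fun h => hbj.ne' (congrFun h j)) ht
    have hr : 0 < √(powerSum b a t) := sqrt_pos.2 hQ
    have hA : ∑ j, a j ≤ 2 * √(powerSum b a t) := by
      have := le_sqrt_of_sq_le hlarge
      linarith
    have hP := powerSum_nonneg (a := a) (mul_nonneg hb ha) ht.le
    rw [corrector, abs_of_nonneg (by positivity), div_le_one (by positivity)]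
    calc powerSum (b * a) a t ≤ (∑ j, a j) * powerSum b a t := powerSum_mul_le hb ha ht.le
      _ ≤ 2 * √(powerSum b a t) * √(powerSum b a t) ^ 2 := by
        rw [sq_sqrt hQ.le]; exact mul_le_mul_of_nonneg_right hA hQ.le
      _ = 2 * √(powerSum b a t) ^ 3 := by ring
  · push Not at hgrow
    have hba : b * a = 0 := funext fun j =>
      mul_eq_zero.2 <| (hb j).eq_or_lt.imp Eq.symm fun hbj => le_antisymm (hgrow j hbj) (ha j)
    refine Eventually.of_forall fun t => ?_
    rw [corrector, hba]
    simp [powerSum]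

theorem norm_le_mul_powerSum_rpow {E : Type*} [NormedAddCommGroup E] [InnerProductSpace ℝ E]
    (hb : 0 ≤ b) (hb0 : b ≠ 0) (ha : 0 ≤ a) {y w : ℝ → E}
    (hy : ∀ t > 0, HasDerivAt y (t⁻¹ • w t) t)
    (hw : ∀ t > 0, HasDerivAt w (-(powerSum b a t / t) • y t) t) :
    ∃ C, 0 ≤ C ∧ ∃ T, 0 < T ∧ ∀ t ≥ T, ‖y t‖ ≤ C * powerSum b a t ^ (-(1 : ℝ) / 4) := by
  obtain ⟨T₀, hT₀⟩ := eventually_atTop.1 (eventually_abs_corrector_le_one hb ha)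
  have hT : 0 < max T₀ 1 := lt_max_of_lt_right one_pos
  have htpos : ∀ t ≥ max T₀ 1, 0 < t := fun t ht => hT.trans_le ht
  have hQ : ∀ t ≥ max T₀ 1, 0 < powerSum b a t := fun t ht => powerSum_pos hb hb0 (htpos t ht)
  obtain ⟨M, hM⟩ := exists_mul_norm_sq_le (r := fun s => √(powerSum b a s)) (k := corrector b a)
    hT (by have := sum_nonneg fun j (_ : j ∈ univ) => ha j; positivity : 0 ≤ 3 * (∑ j, a j) / 2)
    (fun t ht => sqrt_pos.2 (hQ t ht))
    (fun t ht => hasDerivAt_sqrt_powerSum hb hb0 (htpos t ht))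
    (fun t ht => hasDerivAt_corrector hb hb0 (htpos t ht))
    (fun t ht => by
      have := (htpos t ht).ne'
      have := (sqrt_pos.2 (hQ t ht)).ne'
      rw [corrector]
      field_simp)
    (fun t ht => hT₀ t (le_of_max_le_left ht))
    (fun t ht => abs_deriv_corrector_le hb hb0 ha (htpos t ht))
    (fun t ht => hy t (htpos t ht))
    (fun t ht => by rw [sq_sqrt (hQ t ht).le]; exact hw t (htpos t ht))
  exact ⟨√M, sqrt_nonneg M, max T₀ 1, hT, fun t ht =>
    le_sqrt_mul_rpow_of_sqrt_mul_sq_le (hQ t ht) (hM t ht)⟩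

end PowerSum

theorem hasDerivAt_smul_deriv {α : ℝ → ℂ} {q t : ℝ} (ht : t ≠ 0)
    (hα' : DifferentiableAt ℝ (deriv α) t)
    (hode : deriv (deriv α) t + deriv α t / (t : ℂ) + (q : ℂ) * α t = 0) :
    HasDerivAt (fun s => s • deriv α s) (-(t * q) • α t) t := by
  refine ((hasDerivAt_id t).smul hα'.hasDerivAt).congr_deriv ?_
  have : (t : ℂ) ≠ 0 := Complex.ofReal_ne_zero.2 ht
  simp only [id, Complex.real_smul, one_smul]
  push_cast
  field_simp at hode
  linear_combination hode

end ModeAmplitude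

open ModeAmplitude

theorem large_time_amplitude_bound_general (p ω : Fin 3 → ℝ)
    (hsq : ∑ j, (p j) ^ 2 = 1)
    (hω : ω ≠ 0)
    (α : ℝ → ℂ)
    (hα : ∀ t > (0:ℝ), DifferentiableAt ℝ α t)
    (hα' : ∀ t > (0:ℝ), DifferentiableAt ℝ (deriv α) t)
    (hode : ∀ t > (0:ℝ), deriv (deriv α) t + deriv α t / (t : ℂ)
        + ((4 * π ^ 2 * ∑ j, (ω j) ^ 2 * t ^ (-(2 * p j)) : ℝ) : ℂ) * α t = 0) :
    ∃ C : ℝ, 0 ≤ C ∧ ∃ T : ℝ, 0 < T ∧ ∀ t ≥ T,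
      ‖α t‖ ≤ C * (∑ j, (ω j) ^ 2 * t ^ (2 - 2 * p j)) ^ (-(1:ℝ)/4) := by
  set b : Fin 3 → ℝ := fun j => 4 * π ^ 2 * ω j ^ 2
  set a : Fin 3 → ℝ := fun j => 2 - 2 * p j
  have hb : 0 ≤ b := fun j => by positivity
  have hb0 : b ≠ 0 := fun h => hω <| funext fun j => by simpa [b, pi_ne_zero] using congrFun h j
  have ha : 0 ≤ a := fun j => by
    have := single_le_sum (f := fun i => p i ^ 2) (fun i _ => sq_nonneg (p i)) (mem_univ j)
    simp only [a, Pi.zero_apply]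
    nlinarith
  have hS : ∀ t, powerSum b a t = 4 * π ^ 2 * ∑ j, ω j ^ 2 * t ^ (2 - 2 * p j) := fun t => by
    simp only [powerSum, b, a, mul_sum, mul_assoc]
  have hQ_div : ∀ t > 0, powerSum b a t / t = t * (4 * π ^ 2 * ∑ j, ω j ^ 2 * t ^ (-(2 * p j))) :=
    fun t ht => by
      rw [div_eq_iff ht.ne', hS]
      simp only [mul_sum, sum_mul]
      refine sum_congr rfl fun j _ => ?_
      rw [show 2 - 2 * p j = -(2 * p j) + 2 by ring, rpow_add ht, rpow_two]
      ring
  obtain ⟨C, hC, T, hT, hbound⟩ := norm_le_mul_powerSum_rpow hb hb0 ha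
    (y := α) (w := fun t => t • deriv α t)
    (fun t ht => by simpa only [inv_smul_smul₀ ht.ne'] using (hα t ht).hasDerivAt)
    (fun t ht => by rw [hQ_div t ht]; exact hasDerivAt_smul_deriv ht.ne' (hα' t ht) (hode t ht))
  refine ⟨C * (4 * π ^ 2) ^ (-(1 : ℝ) / 4), by positivity, T, hT, fun t ht => ?_⟩
  have hS_nonneg : 0 ≤ ∑ j, ω j ^ 2 * t ^ (2 - 2 * p j) :=
    sum_nonneg fun j _ => mul_nonneg (sq_nonneg _) (rpow_nonneg (hT.trans_le ht).le _)
  rw [mul_assoc, ← mul_rpow (by positivity) hS_nonneg, ← hS]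
  exact hbound t ht

theorem large_time_amplitude_bound (p ω : Fin 3 → ℝ)
    (hsum : ∑ j, p j = 1) (hsq : ∑ j, (p j) ^ 2 = 1)
    (hω : ω ≠ 0)
    (α : ℝ → ℂ)
    (hα : ∀ t > (0:ℝ), DifferentiableAt ℝ α t)
    (hα' : ∀ t > (0:ℝ), DifferentiableAt ℝ (deriv α) t)
    (hode : ∀ t > (0:ℝ), deriv (deriv α) t + deriv α t / (t : ℂ)
        + ((4 * π ^ 2 * ∑ j, (ω j) ^ 2 * t ^ (-(2 * p j)) : ℝ) : ℂ) * α t = 0) :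
    ∃ C : ℝ, 0 ≤ C ∧ ∃ T : ℝ, 0 < T ∧ ∀ t ≥ T,
      ‖α t‖ ≤ C * (∑ j, (ω j) ^ 2 * t ^ (2 - 2 * p j)) ^ (-(1:ℝ)/4) :=
  large_time_amplitude_bound_general p ω hsq hω α hα hα' hode
end
end
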